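/- The q-bracket of the partition sum-of-divisors function σ(λ) := ∑_{δ|λ} n_δ equals ∑_{λ∈P} n_λ q^{|λ|}; equivalently, for every integer n ≥ 0, ∑_{λ⊢n} σ(λ) = ∑_{k=0}^{n} (∑_{δ⊢k} n_δ) · p(n−k). -/

import Mathlib

/-- The set of partition divisors (sub-partitions) of `l`. -/
def pdivisors (l : Multiset ℕ+) : Finset (Multiset ℕ+) := l.powerset.toFinset

/-- Partition-theoretic Möbius function. -/
def pmu (l : Multiset ℕ+) : ℂ := if l.Nodup then (-1 : ℂ) ^ (Multiset.card l) else 0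

/-- The "integer" of a partition: the product of its parts. -/
def nInt (l : Multiset ℕ+) : ℕ := (l.map (fun a => (a : ℕ))).prod

/-- Partition-theoretic phi function. -/
noncomputable def pphi (l : Multiset ℕ+) : ℂ :=
  (nInt l : ℂ) * ∏ a ∈ l.toFinset, (1 - (a : ℂ)⁻¹)

/-- Convert a `Nat.Partition n` to a multiset of positive integers. -/
def toPtn {n : ℕ} (p : n.Partition) : Multiset ℕ+ :=
  p.parts.pmap (fun x hx => ⟨x, hx⟩) (fun _ hx => p.parts_pos hx)

/-- The partition function `p(n)`. -/
def partcount (n : ℕ) : ℕ := Fintype.card (Nat.Partition n)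

/-- A partition lies in `P₌` iff it is nonempty with all parts equal. -/
def isPeq (l : Multiset ℕ+) : Prop :=
  ∃ (a : ℕ+) (k : ℕ), 0 < k ∧ l = Multiset.replicate k a

/-!
Summing `σ(λ) = ∑_{δ ∣ λ} n_δ` over `λ ⊢ n` counts the pairs `δ ≤ λ` weighted by `n_δ`.
Splitting `λ = δ + μ` identifies these with the pairs `(δ, μ)` with `|δ| + |μ| = n`, and for
`|δ| = k` there are `p(n - k)` choices of `μ`.
-/

open Finset

def ptnSize (l : Multiset ℕ+) : ℕ := (l.map (fun a : ℕ+ => (a : ℕ))).sum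

@[simp]
lemma ptnSize_add (l m : Multiset ℕ+) : ptnSize (l + m) = ptnSize l + ptnSize m := by
  simp [ptnSize]

lemma map_coe_toPtn {n : ℕ} (p : n.Partition) :
    (toPtn p).map (fun a : ℕ+ => (a : ℕ)) = p.parts := by
  unfold toPtn
  exact (Multiset.map_pmap _ _ _ _).trans
    ((Multiset.pmap_eq_map _ _ _ _).trans (Multiset.map_id' _))

lemma ptnSize_toPtn {n : ℕ} (p : n.Partition) : ptnSize (toPtn p) = n := by
  rw [ptnSize, map_coe_toPtn, p.parts_sum]

lemma toPtn_injective {n : ℕ} : Function.Injective (toPtn (n := n)) := fun p q h =>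
  Nat.Partition.ext <| by rw [← map_coe_toPtn p, ← map_coe_toPtn q, h]

def ptnFinset (n : ℕ) : Finset (Multiset ℕ+) := univ.image (toPtn (n := n))

lemma mem_ptnFinset {n : ℕ} {l : Multiset ℕ+} : l ∈ ptnFinset n ↔ ptnSize l = n := by
  refine ⟨?_, fun h => ?_⟩
  · rw [ptnFinset, mem_image]
    rintro ⟨p, -, rfl⟩
    exact ptnSize_toPtn p
  · have hpos : ∀ x ∈ l.map (fun a : ℕ+ => (a : ℕ)), 0 < x := by
      simp only [Multiset.mem_map]
      rintro _ ⟨a, -, rfl⟩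
      exact a.pos
    refine mem_image.mpr ⟨⟨_, fun hx => hpos _ hx, h⟩, mem_univ _, ?_⟩
    exact Multiset.map_injective PNat.coe_injective (map_coe_toPtn _)

lemma sum_partition_toPtn {M : Type*} [AddCommMonoid M] (n : ℕ) (f : Multiset ℕ+ → M) :
    ∑ p : n.Partition, f (toPtn p) = ∑ l ∈ ptnFinset n, f l :=
  (sum_image fun _ _ _ _ h => toPtn_injective h).symm

lemma card_ptnFinset (n : ℕ) : #(ptnFinset n) = partcount n :=
  card_image_of_injective _ toPtn_injective

lemma mem_pdivisors {l δ : Multiset ℕ+} : δ ∈ pdivisors l ↔ δ ≤ l := by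
  rw [pdivisors, Multiset.mem_toFinset, Multiset.mem_powerset]

lemma sum_sum_pdivisors_eq_sum_antidiagonal {M : Type*} [AddCommMonoid M] (n : ℕ)
    (F : Multiset ℕ+ → Multiset ℕ+ → M) :
    ∑ l ∈ ptnFinset n, ∑ δ ∈ pdivisors l, F δ (l - δ)
      = ∑ km ∈ antidiagonal n, ∑ δ ∈ ptnFinset km.1, ∑ μ ∈ ptnFinset km.2, F δ μ := by
  simp_rw [← sum_product' (ptnFinset _) (ptnFinset _)]
  rw [sum_sigma', sum_sigma']
  refine sum_nbij' (fun x => ⟨(ptnSize x.2, ptnSize (x.1 - x.2)), (x.2, x.1 - x.2)⟩)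
    (fun y => ⟨y.2.1 + y.2.2, y.2.1⟩) ?_ ?_ ?_ ?_ fun _ _ => rfl
  · rintro ⟨l, δ⟩ h
    simp only [mem_sigma, mem_ptnFinset, mem_pdivisors] at h
    obtain ⟨rfl, hδ⟩ := h
    simp [mem_ptnFinset, ← ptnSize_add, add_tsub_cancel_of_le hδ]
  · rintro ⟨⟨k, m⟩, δ, μ⟩ h
    simp only [mem_sigma, mem_product, HasAntidiagonal.mem_antidiagonal, mem_ptnFinset] at h
    obtain ⟨rfl, rfl, rfl⟩ := h
    simp [mem_ptnFinset, mem_pdivisors]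
  · rintro ⟨l, δ⟩ h
    simp only [mem_sigma, mem_pdivisors] at h
    simp [add_tsub_cancel_of_le h.2]
  · rintro ⟨⟨k, m⟩, δ, μ⟩ h
    simp only [mem_sigma, mem_product, mem_ptnFinset] at h
    obtain ⟨-, rfl, rfl⟩ := h
    simp

/-- `⟨σ⟩_q = ∑_{λ∈P} n_λ q^{|λ|}` where `σ(λ) := ∑_{δ|λ} n_δ`: in graded form, for every
`n ≥ 0`, `∑_{λ⊢n} σ(λ) = ∑_{k=0}^{n} (∑_{δ⊢k} n_δ)·p(n−k)`. -/
theorem qbracket_sigma (n : ℕ) :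
    (∑ p : n.Partition, ∑ δ ∈ pdivisors (toPtn p), nInt δ)
      = ∑ k ∈ Finset.range (n + 1),
          (∑ d : k.Partition, nInt (toPtn d)) * partcount (n - k) := by
  rw [sum_partition_toPtn n (fun l => ∑ δ ∈ pdivisors l, nInt δ),
    sum_sum_pdivisors_eq_sum_antidiagonal n (fun δ _ => nInt δ),
    Nat.sum_antidiagonal_eq_sum_range_succ
      (fun k m => ∑ δ ∈ ptnFinset k, ∑ _ ∈ ptnFinset m, nInt δ)]
  refine sum_congr rfl fun k _ => ?_
  simp [sum_partition_toPtn, card_ptnFinset, sum_mul, mul_comm]
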